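/- For every MEC instance and every discretization constant φ > 1, the optimal values of the deadline-constrained task offloading and resource allocation problem DTRP and of its discretized linear-programming relaxation RDP satisfy ((1−α)/φ)·OPT_DTRP ≤ OPT_RDP. -/

import Mathlib

open scoped BigOperators

/-- An MEC instance: finite sets of tasks `I`, access points `J` and servers `K`; task
parameters (size `s`, per-bit demand `eta`, deadline `dl`, local energy `El`, accessible
APs `acc`); channel gains `G`, noise power `sigma2`, resource units `bu, cu, pu`; integer
capacities `bcap, ccap ≥ 1`; backhaul delays `delay ≥ 0`; maximum offloading power
`pmax ≥ 1`; and a resource allocation bound `0 ≤ alpha < 1` with `⌊alpha * bcap j⌋ ≥ 1` and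
`⌊alpha * ccap k⌋ ≥ 1`. -/
structure MECInstance where
  I : Type
  J : Type
  K : Type
  [fI : Fintype I]
  [fJ : Fintype J]
  [fK : Fintype K]
  s : I → ℝ
  eta : I → ℝ
  dl : I → ℝ
  El : I → ℝ
  acc : I → J → Prop
  G : I → J → ℝ
  sigma2 : ℝ
  bu : ℝ
  cu : ℝ
  pu : ℝ
  bcap : J → ℤ
  ccap : K → ℤ
  delay : J → K → ℝ
  pmax : ℤ
  alpha : ℝ
  hs : ∀ i, 0 < s i
  heta : ∀ i, 0 < eta i
  hdl : ∀ i, 0 < dl i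
  hEl : ∀ i, 0 < El i
  hG : ∀ i j, 0 < G i j
  hsigma2 : 0 < sigma2
  hbu : 0 < bu
  hcu : 0 < cu
  hpu : 0 < pu
  hbcap : ∀ j, 1 ≤ bcap j
  hccap : ∀ k, 1 ≤ ccap k
  hdelay : ∀ j k, 0 ≤ delay j k
  hpmax : 1 ≤ pmax
  halpha0 : 0 ≤ alpha
  halpha1 : alpha < 1
  halphab : ∀ j, 1 ≤ ⌊alpha * (bcap j : ℝ)⌋
  halphac : ∀ k, 1 ≤ ⌊alpha * (ccap k : ℝ)⌋

attribute [instance] MECInstance.fI MECInstance.fJ MECInstance.fK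

namespace MECInstance

variable (P : MECInstance)

/-- Offloading time `t^o_{ij} = s_i / (b_{ij}·b̄·log₂(1 + p_{ij}·p̄·G_{ij}/σ²))`. -/
noncomputable def toff (i : P.I) (j : P.J) (b p : ℤ) : ℝ :=
  P.s i / ((b : ℝ) * P.bu * Real.logb 2 (1 + (p : ℝ) * P.pu * P.G i j / P.sigma2))

/-- Saved energy `E_{ij} = E^l_i − p_{ij}·p̄·t^o_{ij}`. -/
noncomputable def Esaved (i : P.I) (j : P.J) (b p : ℤ) : ℝ :=
  P.El i - (p : ℝ) * P.pu * P.toff i j b p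

/-- Feasibility of a DTRP solution `(x, y, b, c, p)`. -/
def DTRPFeasible (x : P.I → P.J → ℤ) (y : P.I → P.K → ℤ)
    (b : P.I → P.J → ℤ) (c : P.I → P.K → ℤ) (p : P.I → P.J → ℤ) : Prop :=
  (∀ i j, x i j = 0 ∨ x i j = 1) ∧
  (∀ i k, y i k = 0 ∨ y i k = 1) ∧
  (∀ i j, ¬ P.acc i j → x i j = 0) ∧
  (∀ i, ∑ j, x i j ≤ 1) ∧
  (∀ i, ∑ k, y i k ≤ 1) ∧
  (∀ i j, 0 ≤ b i j) ∧ (∀ i k, 0 ≤ c i k) ∧ (∀ i j, 0 ≤ p i j) ∧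
  (∀ j, ∑ i, b i j ≤ P.bcap j) ∧
  (∀ k, ∑ i, c i k ≤ P.ccap k) ∧
  (∀ i j, (b i j : ℝ) ≤ P.alpha * (P.bcap j : ℝ)) ∧
  (∀ i k, (c i k : ℝ) ≤ P.alpha * (P.ccap k : ℝ)) ∧
  (∀ i j, p i j ≤ P.pmax) ∧
  (∀ i j, x i j = 1 → 1 ≤ b i j) ∧
  (∀ i j, x i j = 1 → 1 ≤ p i j) ∧
  (∀ i k, y i k = 1 → 1 ≤ c i k) ∧
  (∀ i, (∑ j, (x i j : ℝ) * P.toff i j (b i j) (p i j))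
      + (∑ j, ∑ k, (x i j : ℝ) * (y i k : ℝ) * P.delay j k)
      + (∑ k, (y i k : ℝ) * (P.s i * P.eta i / ((c i k : ℝ) * P.cu))) ≤ P.dl i)

/-- DTRP objective: total saved energy `Σ_{i,j,k} x_{ij}·y_{ik}·E_{ij}`. -/
noncomputable def DTRPObj (x : P.I → P.J → ℤ) (y : P.I → P.K → ℤ)
    (b : P.I → P.J → ℤ) (p : P.I → P.J → ℤ) : ℝ :=
  ∑ i, ∑ j, ∑ k, (x i j : ℝ) * (y i k : ℝ) * P.Esaved i j (b i j) (p i j)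

/-- Optimal value of DTRP (supremum of objectives of feasible solutions). -/
noncomputable def optDTRP : ℝ :=
  sSup { v : ℝ | ∃ x y b c p, P.DTRPFeasible x y b c p ∧ v = P.DTRPObj x y b p }

/-- `π_j = ⌈log_φ(α·b_j)⌉` (a nonnegative integer). -/
noncomputable def piJ (φ : ℝ) (j : P.J) : ℕ :=
  (⌈Real.logb φ (P.alpha * (P.bcap j : ℝ))⌉).toNat

/-- `λ_k = ⌈log_φ(α·c_k)⌉` (a nonnegative integer). -/
noncomputable def lamK (φ : ℝ) (k : P.K) : ℕ :=
  (⌈Real.logb φ (P.alpha * (P.ccap k : ℝ))⌉).toNat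

/-- Discretized bandwidth levels: `B_m = ⌊φ^m⌋` for `m < π_j`, `B_{π_j} = ⌊α·b_j⌋`. -/
noncomputable def Blev (φ : ℝ) (j : P.J) (m : ℕ) : ℤ :=
  if m < P.piJ φ j then ⌊φ ^ m⌋ else ⌊P.alpha * (P.bcap j : ℝ)⌋

/-- Discretized computation levels: `C_n = ⌊φ^n⌋` for `n < λ_k`, `C_{λ_k} = ⌊α·c_k⌋`. -/
noncomputable def Clev (φ : ℝ) (k : P.K) (n : ℕ) : ℤ :=
  if n < P.lamK φ k then ⌊φ ^ n⌋ else ⌊P.alpha * (P.ccap k : ℝ)⌋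

/-- Allowed offloading time `T_{ijmkn} = d_i − δ_{jk} − s_i·η_i/(C_n·c̄)`. -/
noncomputable def Tcomb (φ : ℝ) (i : P.I) (j : P.J) (k : P.K) (n : ℕ) : ℝ :=
  P.dl i - P.delay j k - P.s i * P.eta i / ((P.Clev φ k n : ℝ) * P.cu)

/-- Required power `P_{ijmkn} = (σ²/(p̄·G_{ij}))·(2^{s_i/(T·B_m·b̄)} − 1)`. -/
noncomputable def Pcomb (φ : ℝ) (i : P.I) (j : P.J) (m : ℕ) (k : P.K) (n : ℕ) : ℝ :=
  (P.sigma2 / (P.pu * P.G i j)) *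
    ((2 : ℝ) ^ (P.s i / (P.Tcomb φ i j k n * (P.Blev φ j m : ℝ) * P.bu)) - 1)

/-- Saved energy `E_{ijmkn} = E^l_i − P_{ijmkn}·p̄·T_{ijmkn}` of a combination. -/
noncomputable def Ecomb (φ : ℝ) (i : P.I) (j : P.J) (m : ℕ) (k : P.K) (n : ℕ) : ℝ :=
  P.El i - P.Pcomb φ i j m k n * P.pu * P.Tcomb φ i j k n

/-- Feasibility of a combination `⟨i,j,m,k,n⟩`. -/
noncomputable def FeasComb (φ : ℝ) (i : P.I) (j : P.J) (m : ℕ) (k : P.K) (n : ℕ) : Prop :=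
  P.acc i j ∧ m ≤ P.piJ φ j ∧ n ≤ P.lamK φ k ∧
  0 < P.Tcomb φ i j k n ∧ P.Pcomb φ i j m k n ≤ (P.pmax : ℝ) ∧ 0 < P.Ecomb φ i j m k n

/-- RDP objective `Σ_{⟨i,j,m,k,n⟩} z_{ijmkn}·E_{ijmkn}`. -/
noncomputable def RDPObj (φ : ℝ) (z : P.I → P.J → ℕ → P.K → ℕ → ℝ) : ℝ :=
  ∑ i, ∑ j, ∑ m ∈ Finset.range (P.piJ φ j + 1), ∑ k, ∑ n ∈ Finset.range (P.lamK φ k + 1),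
    z i j m k n * P.Ecomb φ i j m k n

/-- Feasibility for the LP relaxation RDP: nonnegative `z` supported on feasible
combinations, with `Σ z ≤ 1` per task and discounted capacities `(1−α)·b_j`, `(1−α)·c_k`. -/
noncomputable def RDPFeasible (φ : ℝ) (z : P.I → P.J → ℕ → P.K → ℕ → ℝ) : Prop :=
  (∀ i j m k n, 0 ≤ z i j m k n) ∧
  (∀ i j m k n, ¬ P.FeasComb φ i j m k n → z i j m k n = 0) ∧
  (∀ i, ∑ j, ∑ m ∈ Finset.range (P.piJ φ j + 1), ∑ k, ∑ n ∈ Finset.range (P.lamK φ k + 1),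
      z i j m k n ≤ 1) ∧
  (∀ j, ∑ i, ∑ m ∈ Finset.range (P.piJ φ j + 1), ∑ k, ∑ n ∈ Finset.range (P.lamK φ k + 1),
      z i j m k n * (P.Blev φ j m : ℝ) ≤ (1 - P.alpha) * (P.bcap j : ℝ)) ∧
  (∀ k, ∑ i, ∑ j, ∑ m ∈ Finset.range (P.piJ φ j + 1), ∑ n ∈ Finset.range (P.lamK φ k + 1),
      z i j m k n * (P.Clev φ k n : ℝ) ≤ (1 - P.alpha) * (P.ccap k : ℝ))

/-- Optimal value of RDP. -/
noncomputable def optRDP (φ : ℝ) : ℝ :=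
  sSup { v : ℝ | ∃ z, P.RDPFeasible φ z ∧ v = P.RDPObj φ z }

end MECInstance

/-!
Given a feasible DTRP solution, round the bandwidth and computing allocation of every offloaded
task up to the next discretization level; by construction of the levels this costs at most a
factor `φ`. Larger allocations leave more time `T` for the upload and need less power, and since
`T ↦ T (2 ^ (a / T) - 1)` is decreasing (the secant slopes of the convex `2 ^ ·` increase), the
transmit energy drops as well. So every profitable (task, AP, server) triple of the solution
yields a feasible combination saving at least as much energy. Putting weight `(1 - α) / φ` on
these combinations respects the capacities `(1 - α) b_j` and `(1 - α) c_k` of RDP, whence an RDP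
solution of value at least `(1 - α) / φ` times the DTRP value.
-/

theorem mul_rpow_div_sub_one_le {c a t T : ℝ} (hc : 0 < c) (ha : 0 ≤ a) (ht : 0 < t)
    (htT : t ≤ T) : T * (c ^ (a / T) - 1) ≤ t * (c ^ (a / t) - 1) := by
  rcases ha.eq_or_lt with rfl | ha
  · simp
  have hT : 0 < T := ht.trans_le htT
  have hslope := (convexOn_rpow_left hc).secant_mono (Set.mem_univ 0) (Set.mem_univ (a / T))
    (Set.mem_univ (a / t)) (div_pos ha hT).ne' (div_pos ha ht).ne'
    (div_le_div_of_nonneg_left ha.le ht htT)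
  simp only [Real.rpow_zero, sub_zero, div_div_eq_mul_div] at hslope
  rw [div_le_div_iff_of_pos_right ha] at hslope
  linarith

theorem sum_sum_ite_and_mul {α β : Type*} [DecidableEq α] [DecidableEq β] {s : Finset α}
    {t : Finset β} {a : α} {b : β} {p : Prop} [Decidable p] (hmem : p → a ∈ s ∧ b ∈ t) (c : ℝ)
    (w : α → β → ℝ) :
    ∑ x ∈ s, ∑ y ∈ t, (if p ∧ x = a ∧ y = b then c else 0) * w x y =
      if p then c * w a b else 0 := by
  by_cases hp : p
  · simp [hp, ite_and, hmem hp]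
  · simp [hp]

theorem sum_sum_le_of_le_mul {ι κ : Type*} [Fintype ι] [Fintype κ] {f v : ι → κ → ℝ}
    {u : ι → ℝ} {C : ℝ} (hf : ∀ i k, f i k ≤ u i * v i k) (hu : ∀ i, 0 ≤ u i)
    (hv : ∀ i, ∑ k, v i k ≤ 1) (hC : ∑ i, u i ≤ C) : ∑ i, ∑ k, f i k ≤ C :=
  calc ∑ i, ∑ k, f i k ≤ ∑ i, u i * ∑ k, v i k := by
        gcongr with i; rw [Finset.mul_sum]; exact Finset.sum_le_sum fun k _ => hf i k
    _ ≤ ∑ i, u i := Finset.sum_le_sum fun i _ => mul_le_of_le_one_right (hu i) (hv i)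
    _ ≤ C := hC

theorem eq_zero_of_sum_le_one {α : Type*} [Fintype α] [DecidableEq α] {g : α → ℤ}
    (h01 : ∀ a, g a = 0 ∨ g a = 1) (hsum : ∑ a, g a ≤ 1) {a₀ a : α} (ha₀ : g a₀ = 1)
    (hne : a ≠ a₀) : g a = 0 := by
  have hnn : ∀ x, 0 ≤ g x := fun x => by rcases h01 x with h | h <;> omega
  have := Finset.add_sum_erase Finset.univ g (Finset.mem_univ a₀)
  have := Finset.single_le_sum (fun x _ => hnn x) (Finset.mem_erase.2 ⟨hne, Finset.mem_univ a⟩)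
  rcases h01 a with h | h <;> omega

theorem sum_mul_eq_of_sum_le_one {α : Type*} [Fintype α] {g : α → ℤ}
    (h01 : ∀ a, g a = 0 ∨ g a = 1) (hsum : ∑ a, g a ≤ 1) {a₀ : α} (ha₀ : g a₀ = 1)
    (f : α → ℝ) : ∑ a, (g a : ℝ) * f a = f a₀ := by
  classical
  rw [Fintype.sum_eq_single a₀ fun a hne => by
    rw [eq_zero_of_sum_le_one h01 hsum ha₀ hne, Int.cast_zero, zero_mul], ha₀, Int.cast_one,
    one_mul]

def RoundsUp (φ : ℝ) (lev : ℕ → ℤ) (π : ℕ) (v : ℤ) (m : ℕ) : Prop :=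
  m ≤ π ∧ v ≤ lev m ∧ (lev m : ℝ) ≤ φ * v

theorem RoundsUp.div_mul_le {φ : ℝ} {lev : ℕ → ℤ} {π : ℕ} {v : ℤ} {m : ℕ}
    (h : RoundsUp φ lev π v m) (hφ : 0 < φ) {a : ℝ} (ha : 0 ≤ a) : a / φ * lev m ≤ a * v := by
  rw [div_mul_eq_mul_div, div_le_iff₀ hφ, mul_assoc, mul_comm (v : ℝ)]
  exact mul_le_mul_of_nonneg_left h.2.2 ha

/-- `Blev φ j` and `Clev φ k` are `discreteLevel φ A` for `A = α b_j` and `A = α c_k`. -/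
noncomputable def discreteLevel (φ A : ℝ) (m : ℕ) : ℤ :=
  if m < (⌈Real.logb φ A⌉).toNat then ⌊φ ^ m⌋ else ⌊A⌋

theorem le_pow_toNat_ceil_logb {φ A : ℝ} (hφ : 1 < φ) (hA : 0 < A) :
    A ≤ φ ^ (⌈Real.logb φ A⌉).toNat := by
  rw [← Real.rpow_natCast, ← Real.logb_le_iff_le_rpow hφ hA]
  exact (Int.le_ceil _).trans (by exact_mod_cast Int.self_le_toNat _)

theorem discreteLevel_le_pow {φ A : ℝ} (hφ : 1 < φ) (hA : 0 < A) {m : ℕ}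
    (hm : m ≤ (⌈Real.logb φ A⌉).toNat) : (discreteLevel φ A m : ℝ) ≤ φ ^ m := by
  unfold discreteLevel
  split_ifs with h
  · exact Int.floor_le _
  · rw [show m = (⌈Real.logb φ A⌉).toNat by omega]
    exact (Int.floor_le A).trans (le_pow_toNat_ceil_logb hφ hA)

theorem one_le_discreteLevel {φ A : ℝ} (hφ : 1 ≤ φ) (hA : 1 ≤ ⌊A⌋) (m : ℕ) :
    1 ≤ discreteLevel φ A m := by
  unfold discreteLevel
  split_ifs
  · exact Int.le_floor.2 (by exact_mod_cast one_le_pow₀ hφ)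
  · exact hA

theorem exists_roundsUp_discreteLevel {φ A : ℝ} (hφ : 1 < φ) {v : ℤ} (hv : 1 ≤ v)
    (hvA : (v : ℝ) ≤ A) :
    ∃ m, RoundsUp φ (discreteLevel φ A) (⌈Real.logb φ A⌉).toNat v m := by
  classical
  set π := (⌈Real.logb φ A⌉).toNat
  have hA : 0 < A := lt_of_lt_of_le (by exact_mod_cast hv) hvA
  have hlast : v ≤ discreteLevel φ A π := by
    rw [discreteLevel, if_neg (lt_irrefl _)]
    exact Int.le_floor.2 hvA
  have hex : ∃ m, v ≤ discreteLevel φ A m := ⟨π, hlast⟩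
  have hfind : Nat.find hex ≤ π := Nat.find_min' hex hlast
  refine ⟨Nat.find hex, hfind, Nat.find_spec hex, ?_⟩
  have hv1 : (1 : ℝ) ≤ v := by exact_mod_cast hv
  refine (discreteLevel_le_pow hφ hA hfind).trans ?_
  rcases Nat.eq_zero_or_eq_succ_pred (Nat.find hex) with h0 | hsucc
  · rw [h0, pow_zero]; nlinarith
  · -- the level below was still too small, and below `π` the levels are `⌊φ ^ m⌋`
    set m := (Nat.find hex).pred
    have hmin : discreteLevel φ A m < v := not_le.1 (Nat.find_min hex (by omega))
    have hmπ : m < π := by omega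
    rw [discreteLevel, if_pos hmπ, Int.floor_lt] at hmin
    rw [hsucc, pow_succ, mul_comm]
    exact mul_le_mul_of_nonneg_left hmin.le (by linarith)

namespace MECInstance

variable {P : MECInstance} {φ : ℝ} {i : P.I} {j : P.J} {k : P.K} {m n : ℕ} {T T' B B' : ℝ}

/-- Shannon's rate formula inverted: the power needed to upload `s i` bits through AP `j` within
time `T` on `B` bandwidth units. -/
noncomputable def txPower (P : MECInstance) (i : P.I) (j : P.J) (T B : ℝ) : ℝ :=
  P.sigma2 / (P.pu * P.G i j) * ((2 : ℝ) ^ (P.s i / (T * B * P.bu)) - 1)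

theorem Pcomb_eq_txPower :
    P.Pcomb φ i j m k n = P.txPower i j (P.Tcomb φ i j k n) (P.Blev φ j m) := rfl

theorem toff_pos {b p : ℤ} (hb : 0 < b) (hp : 0 < p) : 0 < P.toff i j b p := by
  have := P.hs i; have := P.hbu; have := P.hpu; have := P.hG i j; have := P.hsigma2
  have hX : 1 < 1 + (p : ℝ) * P.pu * P.G i j / P.sigma2 := by
    have : (0 : ℝ) < p := by exact_mod_cast hp
    simp only [lt_add_iff_pos_right]; positivity
  have := Real.logb_pos one_lt_two hX
  have : (0 : ℝ) < b := by exact_mod_cast hb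
  unfold toff; positivity

theorem txPower_toff {b p : ℤ} (hb : 0 < b) (hp : 0 < p) :
    P.txPower i j (P.toff i j b p) b = p := by
  have := P.hs i; have := P.hbu; have := P.hpu; have := P.hG i j; have := P.hsigma2
  set X := 1 + (p : ℝ) * P.pu * P.G i j / P.sigma2
  have hX : 1 < X := by
    have : (0 : ℝ) < p := by exact_mod_cast hp
    simp only [X, lt_add_iff_pos_right]; positivity
  have hL := Real.logb_pos one_lt_two hX
  have hb' : (0 : ℝ) < b := by exact_mod_cast hb
  have hexp : P.s i / (P.toff i j b p * b * P.bu) = Real.logb 2 X := by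
    show P.s i / (P.s i / (b * P.bu * Real.logb 2 X) * b * P.bu) = _
    field_simp
  rw [txPower, hexp, Real.rpow_logb two_pos one_lt_two.ne' (by linarith)]
  simp only [X]; field_simp; ring

theorem txPower_nonneg (hT : 0 ≤ T) (hB : 0 ≤ B) : 0 ≤ P.txPower i j T B := by
  have := P.hs i; have := P.hbu; have := P.hpu; have := P.hG i j; have := P.hsigma2
  have : (1 : ℝ) ≤ 2 ^ (P.s i / (T * B * P.bu)) := Real.one_le_rpow one_le_two (by positivity)
  have : 0 ≤ (2 : ℝ) ^ (P.s i / (T * B * P.bu)) - 1 := by linarith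
  unfold txPower; positivity

theorem txPower_anti (hT : 0 < T) (hTT' : T ≤ T') (hB : 0 < B) (hBB' : B ≤ B') :
    P.txPower i j T' B' ≤ P.txPower i j T B := by
  have := P.hs i; have := P.hbu; have := P.hpu; have := P.hG i j; have := P.hsigma2
  unfold txPower
  gcongr <;> linarith

theorem mul_txPower_anti (hT : 0 < T) (hTT' : T ≤ T') (hB : 0 < B) :
    T' * P.txPower i j T' B ≤ T * P.txPower i j T B := by
  have := P.hs i; have := P.hbu; have := P.hpu; have := P.hG i j; have := P.hsigma2
  have key := mul_rpow_div_sub_one_le two_pos (a := P.s i / (B * P.bu)) (by positivity) hT hTT'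
  have hdiv : ∀ T, P.s i / (B * P.bu) / T = P.s i / (T * B * P.bu) := fun T => by
    rw [div_div]; ring_nf
  rw [hdiv, hdiv] at key
  have hK : 0 ≤ P.sigma2 / (P.pu * P.G i j) := by positivity
  unfold txPower
  nlinarith [mul_le_mul_of_nonneg_left key hK]

theorem one_le_Blev (hφ : 1 ≤ φ) (j : P.J) (m : ℕ) : 1 ≤ P.Blev φ j m :=
  one_le_discreteLevel hφ (P.halphab j) m

theorem Ecomb_le_El (hφ : 1 ≤ φ) (hT : 0 < P.Tcomb φ i j k n) :
    P.Ecomb φ i j m k n ≤ P.El i := by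
  have hB : (0 : ℝ) ≤ P.Blev φ j m := by exact_mod_cast (one_le_Blev hφ j m).trans' zero_le_one
  have := txPower_nonneg (i := i) (j := j) hT.le hB
  rw [Ecomb, Pcomb_eq_txPower]
  nlinarith [mul_nonneg (mul_nonneg this P.hpu.le) hT.le]

section Rounding

variable {bv pv cv : ℤ}

theorem toff_le_Tcomb (hc : 0 < cv)
    (hdead : P.toff i j bv pv + P.delay j k + P.s i * P.eta i / (cv * P.cu) ≤ P.dl i)
    (hC : cv ≤ P.Clev φ k n) : P.toff i j bv pv ≤ P.Tcomb φ i j k n := by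
  have := P.hs i; have := P.heta i; have := P.hcu
  have hc' : (0 : ℝ) < cv := by exact_mod_cast hc
  have : P.s i * P.eta i / (P.Clev φ k n * P.cu) ≤ P.s i * P.eta i / (cv * P.cu) := by
    gcongr
  unfold Tcomb; linarith

theorem Pcomb_le_of_toff_le (hb : 0 < bv) (hp : 0 < pv)
    (htT : P.toff i j bv pv ≤ P.Tcomb φ i j k n) (hB : bv ≤ P.Blev φ j m) :
    P.Pcomb φ i j m k n ≤ pv := by
  rw [Pcomb_eq_txPower, ← txPower_toff (i := i) (j := j) hb hp]
  exact txPower_anti (toff_pos hb hp) htT (by exact_mod_cast hb) (by exact_mod_cast hB)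

theorem Esaved_le_Ecomb_of_toff_le (hb : 0 < bv) (hp : 0 < pv)
    (htT : P.toff i j bv pv ≤ P.Tcomb φ i j k n) (hB : bv ≤ P.Blev φ j m) :
    P.Esaved i j bv pv ≤ P.Ecomb φ i j m k n := by
  set t := P.toff i j bv pv
  set T := P.Tcomb φ i j k n
  have ht : 0 < t := toff_pos hb hp
  have hb' : (0 : ℝ) < bv := by exact_mod_cast hb
  have henergy : T * P.txPower i j T (P.Blev φ j m) ≤ t * pv :=
    calc T * P.txPower i j T (P.Blev φ j m) ≤ T * P.txPower i j T bv :=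
          mul_le_mul_of_nonneg_left (txPower_anti (ht.trans_le htT) le_rfl hb'
            (by exact_mod_cast hB)) (by linarith)
      _ ≤ t * P.txPower i j t bv := mul_txPower_anti ht htT hb'
      _ = t * pv := by rw [txPower_toff hb hp]
  rw [Esaved, Ecomb, Pcomb_eq_txPower]
  nlinarith [mul_le_mul_of_nonneg_left henergy P.hpu.le]

end Rounding

section RDP

variable {z : P.I → P.J → ℕ → P.K → ℕ → ℝ}

open Finset in
theorem rdpObj_le_sum_El (hφ : 1 ≤ φ) (hz : P.RDPFeasible φ z) :
    P.RDPObj φ z ≤ ∑ i, P.El i := by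
  obtain ⟨hz0, hsupp, htask, -, -⟩ := hz
  refine sum_le_sum fun i _ => ?_
  calc ∑ j, ∑ m ∈ range (P.piJ φ j + 1), ∑ k, ∑ n ∈ range (P.lamK φ k + 1),
          z i j m k n * P.Ecomb φ i j m k n
      ≤ ∑ j, ∑ m ∈ range (P.piJ φ j + 1), ∑ k, ∑ n ∈ range (P.lamK φ k + 1),
          z i j m k n * P.El i := by
        refine sum_le_sum fun j _ => sum_le_sum fun m _ => sum_le_sum fun k _ =>
          sum_le_sum fun n _ => ?_
        by_cases hf : P.FeasComb φ i j m k n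
        · exact mul_le_mul_of_nonneg_left (Ecomb_le_El hφ hf.2.2.2.1) (hz0 i j m k n)
        · simp [hsupp i j m k n hf]
    _ = (∑ j, ∑ m ∈ range (P.piJ φ j + 1), ∑ k, ∑ n ∈ range (P.lamK φ k + 1),
          z i j m k n) * P.El i := by simp only [sum_mul]
    _ ≤ P.El i := mul_le_of_le_one_left (P.hEl i).le (htask i)

theorem rdpObj_le_optRDP (hφ : 1 ≤ φ) (hz : P.RDPFeasible φ z) : P.RDPObj φ z ≤ P.optRDP φ :=
  le_csSup ⟨_, by rintro _ ⟨z, hz, rfl⟩; exact rdpObj_le_sum_El hφ hz⟩ ⟨z, hz, rfl⟩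

theorem rdpFeasible_zero (φ : ℝ) : P.RDPFeasible φ 0 := by
  have hα := P.halpha1
  refine ⟨fun _ _ _ _ _ => le_rfl, fun _ _ _ _ _ _ => rfl, fun _ => by simp, fun j => ?_,
    fun k => ?_⟩
  · have : (1 : ℝ) ≤ P.bcap j := by exact_mod_cast P.hbcap j
    simp only [Pi.zero_apply, zero_mul, Finset.sum_const_zero]; nlinarith
  · have : (1 : ℝ) ≤ P.ccap k := by exact_mod_cast P.hccap k
    simp only [Pi.zero_apply, zero_mul, Finset.sum_const_zero]; nlinarith

theorem optRDP_nonneg (hφ : 1 ≤ φ) : 0 ≤ P.optRDP φ := by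
  simpa [RDPObj] using rdpObj_le_optRDP hφ (rdpFeasible_zero (P := P) φ)

end RDP

variable {x : P.I → P.J → ℤ} {y : P.I → P.K → ℤ} {b p : P.I → P.J → ℤ} {c : P.I → P.K → ℤ}
  {M : P.I → P.J → ℕ} {N : P.I → P.K → ℕ}

theorem DTRPFeasible.deadline (h : P.DTRPFeasible x y b c p) (hx : x i j = 1) (hy : y i k = 1) :
    P.toff i j (b i j) (p i j) + P.delay j k + P.s i * P.eta i / (c i k * P.cu) ≤ P.dl i := by
  obtain ⟨hx01, hy01, -, hxs, hys, -, -, -, -, -, -, -, -, -, -, -, hdead⟩ := h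
  have := hdead i
  simp only [mul_assoc (x i _ : ℝ), ← Finset.mul_sum] at this
  simpa only [sum_mul_eq_of_sum_le_one (hx01 i) (hxs i) hx,
    sum_mul_eq_of_sum_le_one (hy01 i) (hys i) hy] using this

theorem DTRPFeasible.x_nonneg (h : P.DTRPFeasible x y b c p) (i : P.I) (j : P.J) :
    (0 : ℝ) ≤ x i j := by
  rcases h.1 i j with h | h <;> simp [h]

theorem DTRPFeasible.y_nonneg (h : P.DTRPFeasible x y b c p) (i : P.I) (k : P.K) :
    (0 : ℝ) ≤ y i k := by
  rcases h.2.1 i k with h | h <;> simp [h]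

def Served (P : MECInstance) (x : P.I → P.J → ℤ) (y : P.I → P.K → ℤ) (b p : P.I → P.J → ℤ)
    (i : P.I) (j : P.J) (k : P.K) : Prop :=
  x i j = 1 ∧ y i k = 1 ∧ 0 < P.Esaved i j (b i j) (p i j)

def IsLevelChoice (P : MECInstance) (φ : ℝ) (x : P.I → P.J → ℤ) (y : P.I → P.K → ℤ)
    (b : P.I → P.J → ℤ) (c : P.I → P.K → ℤ) (M : P.I → P.J → ℕ) (N : P.I → P.K → ℕ) : Prop :=
  (∀ i j, x i j = 1 → RoundsUp φ (P.Blev φ j) (P.piJ φ j) (b i j) (M i j)) ∧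
    (∀ i k, y i k = 1 → RoundsUp φ (P.Clev φ k) (P.lamK φ k) (c i k) (N i k))

theorem exists_isLevelChoice (hφ : 1 < φ) (hfeas : P.DTRPFeasible x y b c p) :
    ∃ M N, P.IsLevelChoice φ x y b c M N := by
  obtain ⟨-, -, -, -, -, -, -, -, -, -, hbα, hcα, -, hxb, -, hyc, -⟩ := hfeas
  have hM : ∀ i j, ∃ m, x i j = 1 → RoundsUp φ (P.Blev φ j) (P.piJ φ j) (b i j) m := fun i j =>
    if hx : x i j = 1 then (exists_roundsUp_discreteLevel hφ (hxb i j hx) (hbα i j)).imp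
      fun _ h _ => h
    else ⟨0, fun h => absurd h hx⟩
  have hN : ∀ i k, ∃ n, y i k = 1 → RoundsUp φ (P.Clev φ k) (P.lamK φ k) (c i k) n := fun i k =>
    if hy : y i k = 1 then (exists_roundsUp_discreteLevel hφ (hyc i k hy) (hcα i k)).imp
      fun _ h _ => h
    else ⟨0, fun h => absurd h hy⟩
  choose M hM using hM
  choose N hN using hN
  exact ⟨M, N, hM, hN⟩

theorem feasComb_and_Esaved_le_of_served (hfeas : P.DTRPFeasible x y b c p)
    (hMN : P.IsLevelChoice φ x y b c M N) (hs : P.Served x y b p i j k) :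
    P.FeasComb φ i j (M i j) k (N i k) ∧
      P.Esaved i j (b i j) (p i j) ≤ P.Ecomb φ i j (M i j) k (N i k) := by
  obtain ⟨hx, hy, hE⟩ := hs
  have hdead := hfeas.deadline hx hy
  obtain ⟨-, -, hacc, -, -, -, -, -, -, -, -, -, hpmax, hxb, hxp, hyc, -⟩ := hfeas
  obtain ⟨hMle, hbM, -⟩ := hMN.1 i j hx
  obtain ⟨hNle, hcN, -⟩ := hMN.2 i k hy
  have hb : 0 < b i j := hxb i j hx
  have hp : 0 < p i j := hxp i j hx
  have htT := toff_le_Tcomb (hyc i k hy) hdead hcN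
  have hEle := Esaved_le_Ecomb_of_toff_le hb hp htT hbM
  refine ⟨⟨?_, hMle, hNle, (toff_pos hb hp).trans_le htT, ?_, hE.trans_le hEle⟩, hEle⟩
  · by_contra hna; simp [hacc i j hna] at hx
  · exact (Pcomb_le_of_toff_le hb hp htT hbM).trans (by exact_mod_cast hpmax i j)

open Classical in
/-- Served triples with nonpositive saved energy are dropped, since RDP admits only combinations
with positive saved energy. -/
noncomputable def liftRDP (P : MECInstance) (φ : ℝ) (x : P.I → P.J → ℤ) (y : P.I → P.K → ℤ)
    (b p : P.I → P.J → ℤ) (M : P.I → P.J → ℕ) (N : P.I → P.K → ℕ) :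
    P.I → P.J → ℕ → P.K → ℕ → ℝ :=
  fun i j m k n => if P.Served x y b p i j k ∧ m = M i j ∧ n = N i k then (1 - P.alpha) / φ else 0

open Classical in
theorem sum_sum_liftRDP_mul (hMN : P.IsLevelChoice φ x y b c M N) (i : P.I) (j : P.J) (k : P.K)
    (w : ℕ → ℕ → ℝ) :
    ∑ m ∈ Finset.range (P.piJ φ j + 1), ∑ n ∈ Finset.range (P.lamK φ k + 1),
        P.liftRDP φ x y b p M N i j m k n * w m n =
      if P.Served x y b p i j k then (1 - P.alpha) / φ * w (M i j) (N i k) else 0 :=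
  sum_sum_ite_and_mul (fun hs => ⟨Finset.mem_range_succ_iff.2 (hMN.1 i j hs.1).1,
    Finset.mem_range_succ_iff.2 (hMN.2 i k hs.2.1).1⟩) _ w

theorem liftRDP_nonneg (hφ : 1 < φ) (i : P.I) (j : P.J) (m : ℕ) (k : P.K) (n : ℕ) :
    0 ≤ P.liftRDP φ x y b p M N i j m k n := by
  unfold liftRDP
  split_ifs
  · exact div_nonneg (by linarith [P.halpha1]) (by linarith)
  · exact le_rfl

theorem liftRDP_task_sum_le_one (hφ : 1 < φ) (hfeas : P.DTRPFeasible x y b c p)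
    (hMN : P.IsLevelChoice φ x y b c M N) (i : P.I) :
    ∑ j, ∑ m ∈ Finset.range (P.piJ φ j + 1), ∑ k, ∑ n ∈ Finset.range (P.lamK φ k + 1),
      P.liftRDP φ x y b p M N i j m k n ≤ 1 := by
  classical
  have hc1 : (1 - P.alpha) / φ ≤ 1 := (div_le_one (by linarith)).2 (by linarith [P.halpha0])
  have hx0 := hfeas.x_nonneg i
  have hy0 := hfeas.y_nonneg i
  obtain ⟨-, -, -, hxs, hys, -⟩ := hfeas
  calc _ = ∑ j, ∑ k, if P.Served x y b p i j k then (1 - P.alpha) / φ * 1 else 0 := by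
        refine Finset.sum_congr rfl fun j _ => ?_
        rw [Finset.sum_comm]
        refine Finset.sum_congr rfl fun k _ => ?_
        rw [← sum_sum_liftRDP_mul hMN i j k fun _ _ => 1]
        simp only [mul_one]
    _ ≤ 1 := by
      refine sum_sum_le_of_le_mul (u := fun j => (x i j : ℝ)) (v := fun j k => (y i k : ℝ))
        (fun j k => ?_) hx0 (fun _ => by exact_mod_cast hys i) (by exact_mod_cast hxs i)
      split_ifs with hs
      · simpa [hs.1, hs.2.1] using hc1
      · exact mul_nonneg (hx0 j) (hy0 k)

theorem liftRDP_bandwidth_le (hφ : 1 < φ) (hfeas : P.DTRPFeasible x y b c p)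
    (hMN : P.IsLevelChoice φ x y b c M N) (j : P.J) :
    ∑ i, ∑ m ∈ Finset.range (P.piJ φ j + 1), ∑ k, ∑ n ∈ Finset.range (P.lamK φ k + 1),
      P.liftRDP φ x y b p M N i j m k n * (P.Blev φ j m : ℝ) ≤
        (1 - P.alpha) * (P.bcap j : ℝ) := by
  classical
  have hα : 0 ≤ 1 - P.alpha := by linarith [P.halpha1]
  have hy0 := hfeas.y_nonneg
  obtain ⟨-, -, -, -, hys, hb0, -, -, hbcap, -⟩ := hfeas
  have hb0 : ∀ i, (0 : ℝ) ≤ b i j := fun i => by exact_mod_cast hb0 i j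
  calc _ = ∑ i, ∑ k, if P.Served x y b p i j k
          then (1 - P.alpha) / φ * (P.Blev φ j (M i j) : ℝ) else 0 := by
        refine Finset.sum_congr rfl fun i _ => ?_
        rw [Finset.sum_comm]
        exact Finset.sum_congr rfl fun k _ => sum_sum_liftRDP_mul hMN i j k fun m _ => _
    _ ≤ (1 - P.alpha) * (P.bcap j : ℝ) := by
      refine sum_sum_le_of_le_mul (u := fun i => (1 - P.alpha) * b i j)
        (v := fun i k => (y i k : ℝ)) (fun i k => ?_) (fun i => mul_nonneg hα (hb0 i))
        (fun i => by exact_mod_cast hys i) ?_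
      · split_ifs with hs
        · rw [hs.2.1, Int.cast_one, mul_one]
          exact (hMN.1 i j hs.1).div_mul_le (by linarith) hα
        · exact mul_nonneg (mul_nonneg hα (hb0 i)) (hy0 i k)
      · rw [← Finset.mul_sum]
        exact mul_le_mul_of_nonneg_left (by exact_mod_cast hbcap j) hα

theorem liftRDP_computation_le (hφ : 1 < φ) (hfeas : P.DTRPFeasible x y b c p)
    (hMN : P.IsLevelChoice φ x y b c M N) (k : P.K) :
    ∑ i, ∑ j, ∑ m ∈ Finset.range (P.piJ φ j + 1), ∑ n ∈ Finset.range (P.lamK φ k + 1),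
      P.liftRDP φ x y b p M N i j m k n * (P.Clev φ k n : ℝ) ≤
        (1 - P.alpha) * (P.ccap k : ℝ) := by
  classical
  have hα : 0 ≤ 1 - P.alpha := by linarith [P.halpha1]
  have hx0 := hfeas.x_nonneg
  obtain ⟨-, -, -, hxs, -, -, hc0, -, -, hccap, -⟩ := hfeas
  have hc0 : ∀ i, (0 : ℝ) ≤ c i k := fun i => by exact_mod_cast hc0 i k
  simp only [sum_sum_liftRDP_mul hMN _ _ k fun _ n => (P.Clev φ k n : ℝ)]
  refine sum_sum_le_of_le_mul (u := fun i => (1 - P.alpha) * c i k)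
    (v := fun i j => (x i j : ℝ)) (fun i j => ?_) (fun i => mul_nonneg hα (hc0 i))
    (fun i => by exact_mod_cast hxs i) ?_
  · split_ifs with hs
    · rw [hs.1, Int.cast_one, mul_one]
      exact (hMN.2 i k hs.2.1).div_mul_le (by linarith) hα
    · exact mul_nonneg (mul_nonneg hα (hc0 i)) (hx0 i j)
  · rw [← Finset.mul_sum]
    exact mul_le_mul_of_nonneg_left (by exact_mod_cast hccap k) hα

theorem rdpFeasible_liftRDP (hφ : 1 < φ) (hfeas : P.DTRPFeasible x y b c p)
    (hMN : P.IsLevelChoice φ x y b c M N) : P.RDPFeasible φ (P.liftRDP φ x y b p M N) := by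
  refine ⟨liftRDP_nonneg hφ, fun i j m k n hnf => ?_, liftRDP_task_sum_le_one hφ hfeas hMN,
    liftRDP_bandwidth_le hφ hfeas hMN, liftRDP_computation_le hφ hfeas hMN⟩
  unfold liftRDP
  rw [if_neg]
  rintro ⟨hs, rfl, rfl⟩
  exact hnf (feasComb_and_Esaved_le_of_served hfeas hMN hs).1

theorem mul_dtrpObj_le_rdpObj_liftRDP (hφ : 1 < φ) (hfeas : P.DTRPFeasible x y b c p)
    (hMN : P.IsLevelChoice φ x y b c M N) :
    (1 - P.alpha) / φ * P.DTRPObj x y b p ≤ P.RDPObj φ (P.liftRDP φ x y b p M N) := by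
  classical
  have hcφ : 0 ≤ (1 - P.alpha) / φ := div_nonneg (by linarith [P.halpha1]) (by linarith)
  unfold DTRPObj RDPObj
  simp only [Finset.mul_sum]
  refine Finset.sum_le_sum fun i _ => Finset.sum_le_sum fun j _ => ?_
  rw [Finset.sum_comm]
  refine Finset.sum_le_sum fun k _ => ?_
  rw [sum_sum_liftRDP_mul hMN i j k fun m n => P.Ecomb φ i j m k n]
  split_ifs with hs
  · rw [hs.1, hs.2.1, Int.cast_one, one_mul, one_mul]
    exact mul_le_mul_of_nonneg_left (feasComb_and_Esaved_le_of_served hfeas hMN hs).2 hcφ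
  · refine mul_nonpos_of_nonneg_of_nonpos hcφ ?_
    rcases hfeas.1 i j with hx | hx <;> rcases hfeas.2.1 i k with hy | hy <;> simp [hx, hy]
    exact not_lt.1 fun hE => hs ⟨hx, hy, hE⟩

end MECInstance

/-- For every MEC instance and every discretization constant `φ > 1`,
`((1 − α)/φ) · OPT_DTRP ≤ OPT_RDP`. -/
theorem rdp_lower_bounds_dtrp (P : MECInstance) (φ : ℝ) (hφ : 1 < φ) :
    ((1 - P.alpha) / φ) * P.optDTRP ≤ P.optRDP φ := by
  have hc : 0 < (1 - P.alpha) / φ := div_pos (sub_pos.2 P.halpha1) (by linarith)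
  rw [← le_div_iff₀' hc]
  refine Real.sSup_le ?_ (div_nonneg (MECInstance.optRDP_nonneg hφ.le) hc.le)
  rintro _ ⟨x, y, b, c, p, hfeas, rfl⟩
  obtain ⟨M, N, hMN⟩ := MECInstance.exists_isLevelChoice hφ hfeas
  rw [le_div_iff₀' hc]
  exact (MECInstance.mul_dtrpObj_le_rdpObj_liftRDP hφ hfeas hMN).trans
    (MECInstance.rdpObj_le_optRDP hφ.le (MECInstance.rdpFeasible_liftRDP hφ hfeas hMN))
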